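/- The exponential generating function of ∑_{0≤k≤n} C(n,k)|n-2k| is z e^z (I_0(z) + I_1(z)) up to the Poisson factor: e^{-z} ∑_{n≥0} (z/2)^n/n! · ∑_{0≤k≤n} C(n,k)|n-2k| = z e^{-z}(I_0(z) + I_1(z)), where I_α(z) := ∑_{m≥0} (z/2)^{2m+α}/(m! Γ(m+α+1)) is the modified Bessel function. -/

import Mathlib

/-!
Write a_n = ∑_k C(n,k)|n-2k|. The reflection k ↦ n-k makes a_n twice the sum of (n-2k)C(n,k)
over 2k < n, and these partial sums telescope, since
(n+1-2k)C(n+1,k) = (n+1)(C(n,k) - C(n,k-1)). Hence a_{n+1} = 2(n+1)C(n,⌊n/2⌋), and the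
(n+1)-st term of the series is z (z/2)^n / (⌊n/2⌋! ⌈n/2⌉!). Its even-indexed terms sum to
z I_0(z) and its odd-indexed ones to z I_1(z).
-/

noncomputable def besselI (α : ℕ) (z : ℂ) : ℂ :=
  ∑' m : ℕ, (z / 2) ^ (2 * m + α) / ((m.factorial : ℂ) * Complex.Gamma ((m : ℂ) + α + 1))

open Finset Nat

theorem sum_range_choose_mul_sub_two_mul (n j : ℕ) :
    ∑ k ∈ range (j + 1), (n + 1).choose k * (((n + 1 : ℕ) : ℤ) - 2 * k) =
      (n + 1) * n.choose j := by
  induction j with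
  | zero => simp
  | succ j ih =>
    have hpascal : ((n + 1).choose (j + 1) : ℤ) = n.choose j + n.choose (j + 1) := by
      exact_mod_cast Nat.choose_succ_succ' n j
    have habsorb : (n + 1 : ℤ) * n.choose j = (n + 1).choose (j + 1) * (j + 1) := by
      exact_mod_cast Nat.add_one_mul_choose_eq n j
    rw [sum_range_succ, ih]
    push_cast
    linear_combination ((n : ℤ) + 1) * hpascal + 2 * habsorb

theorem sum_range_choose_mul_natAbs_eq_two_mul_sum_max (N : ℕ) :
    ((∑ k ∈ range (N + 1), N.choose k * ((N : ℤ) - 2 * k).natAbs : ℕ) : ℤ) =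
      2 * ∑ k ∈ range (N + 1), N.choose k * max ((N : ℤ) - 2 * k) 0 := by
  have hreflect : ∑ k ∈ range (N + 1), N.choose k * max (-((N : ℤ) - 2 * k)) 0 =
      ∑ k ∈ range (N + 1), N.choose k * max ((N : ℤ) - 2 * k) 0 := by
    rw [← sum_range_reflect]
    refine sum_congr rfl fun k hk => ?_
    have hkN : k ≤ N := Nat.lt_succ_iff.mp (mem_range.mp hk)
    rw [add_tsub_cancel_right, Nat.choose_symm hkN, Nat.cast_sub hkN]
    ring_nf
  push_cast
  simp only [← max_zero_add_max_neg_zero_eq_abs_self, mul_add, sum_add_distrib]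
  rw [hreflect]
  ring

theorem sum_range_choose_mul_max_sub_two_mul (n : ℕ) :
    ∑ k ∈ range (n + 2), (n + 1).choose k * max (((n + 1 : ℕ) : ℤ) - 2 * k) 0 =
      (n + 1) * n.choose (n / 2) := by
  rw [← sum_range_choose_mul_sub_two_mul,
    ← sum_subset (range_subset_range.mpr (by omega : n / 2 + 1 ≤ n + 2))]
  · refine sum_congr rfl fun k hk => ?_
    have := mem_range.mp hk
    rw [max_eq_left (by omega)]
  · intro k _ hk
    rw [mem_range, not_lt] at hk
    rw [max_eq_right (by omega), mul_zero]

theorem sum_range_choose_mul_natAbs_sub_two_mul (n : ℕ) :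
    ∑ k ∈ range (n + 1 + 1), (n + 1).choose k * (((n + 1 : ℕ) : ℤ) - 2 * k).natAbs =
      2 * (n + 1) * n.choose (n / 2) := by
  apply Nat.cast_injective (R := ℤ)
  rw [sum_range_choose_mul_natAbs_eq_two_mul_sum_max, sum_range_choose_mul_max_sub_two_mul]
  push_cast
  ring

theorem pow_div_factorial_mul_factorial_eq_choose_mul {K : Type*} [Field K] [CharZero K] (w : K)
    {n k : ℕ} (hk : k ≤ n) : w ^ n / (k ! * (n - k)! : K) = n.choose k * (w ^ n / n !) := by
  have hfact : (n ! : K) ≠ 0 := Nat.cast_ne_zero.mpr n.factorial_ne_zero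
  rw [Nat.cast_choose K hk]
  field_simp

theorem summable_pow_div_factorial_mul_factorial (w : ℂ) (k : ℕ → ℕ) (hk : ∀ n, k n ≤ n) :
    Summable fun n => w ^ n / ((k n)! * (n - k n)! : ℂ) := by
  refine Summable.of_norm_bounded (Real.summable_pow_div_factorial (2 * ‖w‖)) fun n => ?_
  rw [pow_div_factorial_mul_factorial_eq_choose_mul w (hk n), norm_mul, norm_div, norm_pow,
    Complex.norm_natCast, Complex.norm_natCast, mul_pow, mul_div_assoc]
  gcongr
  exact_mod_cast Nat.choose_le_two_pow n (k n)

theorem besselI_eq_tsum_factorial (α : ℕ) (z : ℂ) :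
    besselI α z = ∑' m : ℕ, (z / 2) ^ (2 * m + α) / (m ! * (m + α)! : ℂ) := by
  refine tsum_congr fun m => ?_
  rw [show (m : ℂ) + α + 1 = ((m + α : ℕ) : ℂ) + 1 by push_cast; ring,
    Complex.Gamma_nat_eq_factorial]

theorem besselI_zero_add_besselI_one (z : ℂ) :
    besselI 0 z + besselI 1 z = ∑' n : ℕ, (z / 2) ^ n / ((n / 2)! * (n - n / 2)! : ℂ) := by
  set f : ℕ → ℂ := fun n => (z / 2) ^ n / ((n / 2)! * (n - n / 2)! : ℂ) with hf
  have hs : Summable f :=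
    summable_pow_div_factorial_mul_factorial (z / 2) (· / 2) fun n => Nat.div_le_self n 2
  have heven : ∀ m, f (2 * m) = (z / 2) ^ (2 * m + 0) / (m ! * (m + 0)! : ℂ) := by
    intro m
    simp only [hf, show 2 * m / 2 = m by omega, show 2 * m - m = m by omega, add_zero]
  have hodd : ∀ m, f (2 * m + 1) = (z / 2) ^ (2 * m + 1) / (m ! * (m + 1)! : ℂ) := by
    intro m
    simp only [hf, show (2 * m + 1) / 2 = m by omega, show 2 * m + 1 - m = m + 1 by omega]
  rw [besselI_eq_tsum_factorial, besselI_eq_tsum_factorial, ← tsum_congr heven, ← tsum_congr hodd]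
  exact tsum_even_add_odd (hs.comp_injective (mul_right_injective₀ two_ne_zero))
    (hs.comp_injective ((add_left_injective 1).comp (mul_right_injective₀ two_ne_zero)))

theorem pow_div_factorial_mul_sum_choose_mul_natAbs (z : ℂ) (n : ℕ) :
    (z / 2) ^ (n + 1) / ((n + 1)! : ℂ) *
        ((∑ k ∈ range (n + 1 + 1), (n + 1).choose k * (((n + 1 : ℕ) : ℤ) - 2 * k).natAbs : ℕ) : ℂ) =
      z * ((z / 2) ^ n / ((n / 2)! * (n - n / 2)! : ℂ)) := by
  rw [sum_range_choose_mul_natAbs_sub_two_mul,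
    pow_div_factorial_mul_factorial_eq_choose_mul _ (Nat.div_le_self n 2), Nat.factorial_succ]
  push_cast
  field_simp
  ring

/-- e^{-z} ∑_{n≥0} (z/2)^n/n! · ∑_{0≤k≤n} C(n,k)|n-2k| = z e^{-z} (I_0(z) + I_1(z)). -/
theorem poisson_gf_abs_diff_eq_bessel (z : ℂ) :
    Complex.exp (-z) *
        ∑' n : ℕ,
          (z / 2) ^ n / (n.factorial : ℂ) *
            ((∑ k ∈ Finset.range (n + 1), n.choose k * ((n : ℤ) - 2 * k).natAbs : ℕ) : ℂ) =
      z * Complex.exp (-z) * (besselI 0 z + besselI 1 z) := by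
  have hzero : ∑ k ∈ range (0 + 1), (0).choose k * (((0 : ℕ) : ℤ) - 2 * k).natAbs = 0 := by simp
  have hs := (summable_pow_div_factorial_mul_factorial (z / 2) (· / 2)
    fun n => Nat.div_le_self n 2).mul_left z
  rw [tsum_eq_zero_add' (by simpa only [pow_div_factorial_mul_sum_choose_mul_natAbs] using hs),
    hzero, Nat.cast_zero, mul_zero, zero_add]
  simp only [pow_div_factorial_mul_sum_choose_mul_natAbs, tsum_mul_left,
    besselI_zero_add_besselI_one]
  ring
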